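/- Let a ≤ 0, c > 0, b ∈ ℝ with a > -2b²/(9c), and let β : Ω → ℝ be bounded measurable with inf_Ω β ≥ 0 and ∫_Ω β(x)dx > 0 on a bounded measurable Ω. Define F(x,ξ) = β(x)((a/2)ξ² + (b/3)ξ³ - (c/4)ξ⁴). Then max{0, limsup_{ξ→0} sup_x F(x,ξ)/ξ², limsup_{|ξ|→∞} sup_x F(x,ξ)/ξ²} = 0, while sup_{ξ≠0} (∫_Ω F(x,ξ)dx)/ξ² = (a/2 + b²/(9c))·∫_Ω β dx > 0. -/
import Mathlib


open MeasureTheory Filter Topology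

set_option maxHeartbeats 1000000 in
theorem stmt_8 {n : ℕ} (Ω : Set (Fin n → ℝ)) (hΩm : MeasurableSet Ω)
    (hΩb : Bornology.IsBounded Ω) (hΩne : Ω.Nonempty)
    (a b c : ℝ) (ha0 : a ≤ 0) (hc : 0 < c) (ha : -2 * b ^ 2 / (9 * c) < a)
    (β : (Fin n → ℝ) → ℝ) (hβm : Measurable β)
    (hβbdd : BddAbove (β '' Ω) ∧ BddBelow (β '' Ω))
    (hβ0 : 0 ≤ sInf (β '' Ω)) (hβint : IntegrableOn β Ω volume)
    (hβpos : 0 < ∫ x in Ω, β x)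
    (F : (Fin n → ℝ) → ℝ → ℝ)
    (hF : ∀ x ξ, F x ξ = β x * (a / 2 * ξ ^ 2 + b / 3 * ξ ^ 3 - c / 4 * ξ ^ 4)) :
    max 0 (max
        (limsup (fun ξ : ℝ => sSup ((fun x => F x ξ) '' Ω) / ξ ^ 2) (𝓝[≠] (0 : ℝ)))
        (limsup (fun ξ : ℝ => sSup ((fun x => F x ξ) '' Ω) / ξ ^ 2) (cocompact ℝ)))
      = 0 ∧
    sSup {y : ℝ | ∃ ξ : ℝ, ξ ≠ 0 ∧ y = (∫ x in Ω, F x ξ) / ξ ^ 2}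
      = (a / 2 + b ^ 2 / (9 * c)) * ∫ x in Ω, β x ∧
    0 < (a / 2 + b ^ 2 / (9 * c)) * ∫ x in Ω, β x := by
  set u : ℝ → ℝ := fun ξ : ℝ => sSup ((fun x => F x ξ) '' Ω) / ξ ^ 2 with hu
  set p : ℝ → ℝ := fun ξ : ℝ => a / 2 + b / 3 * ξ - c / 4 * ξ ^ 2 with hp
  set M : ℝ := sSup (β '' Ω) with hM
  set I : ℝ := ∫ x in Ω, β x with hI
  -- basic facts
  have hβle : ∀ x ∈ Ω, β x ≤ M := fun x hx => le_csSup hβbdd.1 ⟨x, hx, rfl⟩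
  have hβge : ∀ x ∈ Ω, 0 ≤ β x := fun x hx =>
    hβ0.trans (csInf_le hβbdd.2 ⟨x, hx, rfl⟩)
  obtain ⟨x₀, hx₀⟩ := hΩne
  have hM0 : 0 ≤ M := (hβge x₀ hx₀).trans (hβle x₀ hx₀)
  have hFval : ∀ x ξ, F x ξ = β x * (ξ ^ 2 * p ξ) := by
    intro x ξ; rw [hF]; simp only [hp]; ring
  -- constant positivity
  have h9c : (0:ℝ) < 9 * c := by linarith
  have hKey : -2 * b ^ 2 < a * (9 * c) := (div_lt_iff₀ h9c).mp ha
  have hb2 : b ^ 2 / (9 * c) * (9 * c) = b ^ 2 := div_mul_cancel₀ _ (ne_of_gt h9c)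
  have hK : 0 < a / 2 + b ^ 2 / (9 * c) := by nlinarith [hb2, hKey, h9c]
  -- p is bounded above by K
  have hpK : ∀ ξ : ℝ, p ξ ≤ a / 2 + b ^ 2 / (9 * c) := by
    intro ξ
    have h1 : (0:ℝ) ≤ (2 * b - 3 * c * ξ) ^ 2 := sq_nonneg _
    have h2 : b ^ 2 / (9 * c) = b ^ 2 / (9 * c) := rfl
    simp only [hp]
    nlinarith [hb2, sq_nonneg (2 * b - 3 * c * ξ), h9c]
  -- pointwise bound on elements of the image
  have himub : ∀ ξ : ℝ, ∀ y ∈ (fun x => F x ξ) '' Ω, y ≤ ξ ^ 2 * (M * max (p ξ) 0) := by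
    rintro ξ y ⟨x, hx, rfl⟩
    simp only [hFval]
    rcases le_or_gt 0 (p ξ) with hpp | hpp
    · have : β x * (ξ ^ 2 * p ξ) ≤ M * (ξ ^ 2 * p ξ) :=
        mul_le_mul_of_nonneg_right (hβle x hx) (by positivity)
      have hmax : max (p ξ) 0 = p ξ := max_eq_left hpp
      rw [hmax]; nlinarith [this]
    · have h1 : β x * (ξ ^ 2 * p ξ) ≤ 0 :=
        mul_nonpos_of_nonneg_of_nonpos (hβge x hx)
          (mul_nonpos_of_nonneg_of_nonpos (sq_nonneg ξ) hpp.le)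
      have h2 : 0 ≤ ξ ^ 2 * (M * max (p ξ) 0) := by
        have := le_max_right (p ξ) (0:ℝ)
        positivity
      linarith
  have hbddim : ∀ ξ : ℝ, BddAbove ((fun x => F x ξ) '' Ω) := fun ξ =>
    ⟨ξ ^ 2 * (M * max (p ξ) 0), fun y hy => himub ξ y hy⟩
  -- upper bound on u
  have hub : ∀ ξ : ℝ, ξ ≠ 0 → u ξ ≤ M * max (p ξ) 0 := by
    intro ξ hξ
    have hξ2 : (0:ℝ) < ξ ^ 2 := by positivity
    have hs : sSup ((fun x => F x ξ) '' Ω) ≤ ξ ^ 2 * (M * max (p ξ) 0) :=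
      csSup_le ⟨F x₀ ξ, ⟨x₀, hx₀, rfl⟩⟩ (himub ξ)
    simp only [hu]
    rw [div_le_iff₀ hξ2]
    nlinarith [hs]
  -- lower bound on u
  have hlb : ∀ ξ : ℝ, ξ ≠ 0 → min (M * p ξ) 0 ≤ u ξ := by
    intro ξ hξ
    have hξ2 : (0:ℝ) < ξ ^ 2 := by positivity
    have h1 : F x₀ ξ ≤ sSup ((fun x => F x ξ) '' Ω) :=
      le_csSup (hbddim ξ) ⟨x₀, hx₀, rfl⟩
    have h2 : ξ ^ 2 * min (M * p ξ) 0 ≤ F x₀ ξ := by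
      rw [hFval]
      rcases le_or_gt 0 (p ξ) with hpp | hpp
      · have hmin : min (M * p ξ) 0 ≤ 0 := min_le_right _ _
        have : 0 ≤ β x₀ * (ξ ^ 2 * p ξ) := by
          have := hβge x₀ hx₀; positivity
        nlinarith [hξ2]
      · have hmin : min (M * p ξ) 0 = M * p ξ := min_eq_left (by nlinarith)
        rw [hmin]
        have hstep : M * p ξ ≤ β x₀ * p ξ :=
          mul_le_mul_of_nonpos_right (hβle x₀ hx₀) hpp.le
        nlinarith [mul_le_mul_of_nonneg_left hstep (sq_nonneg ξ)]
    simp only [hu]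
    rw [le_div_iff₀ hξ2]
    nlinarith [h1, h2]
  -- tendsto of p at 0
  have hpc : Continuous p := by
    simp only [hp]
    exact (continuous_const.add (continuous_const.mul continuous_id)).sub
      (continuous_const.mul (continuous_pow 2))
  have hpt : Tendsto p (𝓝[≠] (0:ℝ)) (𝓝 (a / 2)) := by
    have h := (hpc.tendsto 0).mono_left (nhdsWithin_le_nhds (s := {(0:ℝ)}ᶜ))
    have hp0 : p 0 = a / 2 := by simp [hp]
    rwa [hp0] at h
  -- limsup at 0 is ≤ 0
  have hvt : Tendsto (fun ξ => M * max (p ξ) 0) (𝓝[≠] (0:ℝ)) (𝓝 0) := by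
    have h1 : Tendsto (fun ξ => max (p ξ) 0) (𝓝[≠] (0:ℝ)) (𝓝 (max (a / 2) 0)) :=
      hpt.max tendsto_const_nhds
    have h2 : max (a / 2) (0:ℝ) = 0 := max_eq_right (by linarith)
    rw [h2] at h1
    simpa using h1.const_mul M
  have hL1 : limsup u (𝓝[≠] (0:ℝ)) ≤ 0 := by
    have hev : ∀ᶠ ξ in 𝓝[≠] (0:ℝ), u ξ ≤ (fun ξ => M * max (p ξ) 0) ξ := by
      filter_upwards [self_mem_nhdsWithin] with ξ hξ
      exact hub ξ hξ
    have hco : IsCoboundedUnder (· ≤ ·) (𝓝[≠] (0:ℝ)) u := by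
      apply isCoboundedUnder_le_of_eventually_le (𝓝[≠] (0:ℝ)) (x := min (M * (a / 2 - 1)) 0)
      filter_upwards [self_mem_nhdsWithin,
        hpt.eventually (eventually_ge_nhds (show a / 2 - 1 < a / 2 by linarith))] with ξ hξ hpξ
      refine le_trans ?_ (hlb ξ hξ)
      exact min_le_min (mul_le_mul_of_nonneg_left hpξ hM0) le_rfl
    calc limsup u (𝓝[≠] (0:ℝ)) ≤ limsup (fun ξ => M * max (p ξ) 0) (𝓝[≠] (0:ℝ)) :=
          limsup_le_limsup hev hco hvt.isBoundedUnder_le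
      _ = 0 := hvt.limsup_eq
  -- eventually at cocompact, u ≤ 0
  have hR : ∀ ξ : ℝ, 1 + 4 * (|a| + |b|) / c ≤ |ξ| → u ξ ≤ 0 := by
    intro ξ hξ
    have hcd : c * (4 * (|a| + |b|) / c) = 4 * (|a| + |b|) :=
      mul_div_cancel₀ _ (ne_of_gt hc)
    have hξ1 : (1:ℝ) ≤ |ξ| := by
      have h4 : (0:ℝ) ≤ 4 * (|a| + |b|) / c := by positivity
      linarith
    have hξne : ξ ≠ 0 := by
      intro h; rw [h, abs_zero] at hξ1; linarith
    have key : c + 4 * (|a| + |b|) ≤ c * |ξ| := by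
      have h := mul_le_mul_of_nonneg_left hξ hc.le
      rw [mul_add, mul_one, hcd] at h
      linarith
    have hmul : (c + 4 * (|a| + |b|)) * |ξ| ≤ c * |ξ| * |ξ| :=
      mul_le_mul_of_nonneg_right key (abs_nonneg ξ)
    have hxx : c * |ξ| * |ξ| = c * ξ ^ 2 := by
      rw [mul_assoc, ← sq, sq_abs]
    have hp0 : p ξ ≤ 0 := by
      simp only [hp]
      linarith [hmul, hxx, le_abs_self a, neg_abs_le a, le_abs_self (b * ξ),
        (abs_mul b ξ).symm.le, (abs_mul b ξ).le,
        mul_nonneg (abs_nonneg a) (sub_nonneg.mpr hξ1),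
        mul_nonneg (abs_nonneg b) (sub_nonneg.mpr hξ1),
        mul_nonneg hc.le (abs_nonneg ξ), abs_nonneg a, abs_nonneg b]
    calc u ξ ≤ M * max (p ξ) 0 := hub ξ hξne
      _ = M * 0 := by rw [max_eq_right hp0]
      _ = 0 := mul_zero M
  have hL2 : limsup u (cocompact ℝ) ≤ 0 := by
    have hev : ∀ᶠ ξ in cocompact ℝ, u ξ ≤ 0 := by
      rw [cocompact_eq_atBot_atTop, eventually_sup]
      constructor
      · filter_upwards [eventually_le_atBot (-(1 + 4 * (|a| + |b|) / c))] with ξ hξ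
        have hRpos : (0:ℝ) < 1 + 4 * (|a| + |b|) / c := by positivity
        exact hR ξ (by rw [abs_of_nonpos (show ξ ≤ 0 by linarith)]; linarith)
      · filter_upwards [eventually_ge_atTop (1 + 4 * (|a| + |b|) / c)] with ξ hξ
        exact hR ξ (le_trans hξ (le_abs_self ξ))
    by_cases hco : IsCoboundedUnder (· ≤ ·) (cocompact ℝ) u
    · exact limsup_le_of_le hco hev
    · have hnb : ¬BddBelow {x : ℝ | ∀ᶠ n in map u (cocompact ℝ), n ≤ x} := by
        rintro ⟨w, hw⟩
        exact hco ⟨w, fun z hz => hw hz⟩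
      simp only [limsup, limsSup]
      rw [csInf_of_not_bddBelow hnb, Real.sInf_empty]
  -- the integral identity
  have hint : ∀ ξ : ℝ, ξ ≠ 0 → (∫ x in Ω, F x ξ) / ξ ^ 2 = (a / 2 + b / 3 * ξ - c / 4 * ξ ^ 2) * I := by
    intro ξ hξ
    have hξ2 : (ξ:ℝ) ^ 2 ≠ 0 := by positivity
    have h1 : (∫ x in Ω, F x ξ) = I * (ξ ^ 2 * p ξ) := by
      simp only [hFval]
      rw [integral_mul_const]
    have h2 : ξ ^ 2 * p ξ / ξ ^ 2 = p ξ := by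
      rw [mul_comm, mul_div_assoc, div_self hξ2, mul_one]
    rw [h1, mul_div_assoc, h2]
    simp only [hp]
    ring
  refine ⟨?_, ?_, ?_⟩
  · exact max_eq_left (max_le hL1 hL2)
  · apply csSup_eq_of_forall_le_of_forall_lt_exists_gt
    · exact ⟨(∫ x in Ω, F x 1) / 1 ^ 2, 1, one_ne_zero, rfl⟩
    · rintro y ⟨ξ, hξ, rfl⟩
      rw [hint ξ hξ]
      have := hpK ξ
      simp only [hp] at this
      nlinarith [hβpos, this]
    · intro w hw
      -- choose s > 0 small
      set K : ℝ := a / 2 + b ^ 2 / (9 * c) with hKdef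
      have hIpos : 0 < I := hβpos
      set s : ℝ := min 1 ((K * I - w) / (c * I + 1)) with hs
      have hδ : 0 < K * I - w := by linarith
      have hs0 : 0 < s := by
        apply lt_min one_pos
        positivity
      have hs1 : s ≤ 1 := min_le_left _ _
      have hs2 : s ≤ (K * I - w) / (c * I + 1) := min_le_right _ _
      have hcI : (0:ℝ) < c * I + 1 := by positivity
      clear_value s K I
      have hval : c / 4 * s ^ 2 * I < K * I - w := by
        have h1 : s * (c * I + 1) ≤ K * I - w := by
          rw [← le_div_iff₀ hcI]; exact hs2
        have hss : s ^ 2 * (c * I) ≤ s * (c * I) :=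
          mul_le_mul_of_nonneg_right (by nlinarith [hs0, hs1])
            (mul_nonneg hc.le hIpos.le)
        nlinarith [hss, h1, hs0, mul_nonneg (mul_nonneg hs0.le hc.le) hIpos.le]
      -- value of p at 2b/(3c) ± s
      have hpval : ∀ t : ℝ, t ^ 2 = s ^ 2 → p (2 * b / (3 * c) + t) = K - c / 4 * s ^ 2 := by
        intro t ht
        simp only [hp, hKdef]
        rw [← ht]
        field_simp
        ring
      have hξex : ∃ ξ : ℝ, ξ ≠ 0 ∧ p ξ = K - c / 4 * s ^ 2 := by
        by_cases h : 2 * b / (3 * c) + s = 0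
        · refine ⟨2 * b / (3 * c) - s, ?_, ?_⟩
          · intro h2
            have : (2:ℝ) * s = 0 := by linarith [h, h2]
            simp at this; linarith
          · have h3 := hpval (-s) (by ring)
            rw [show 2 * b / (3 * c) - s = 2 * b / (3 * c) + -s by ring]
            exact h3
        · exact ⟨2 * b / (3 * c) + s, h, hpval s rfl⟩
      obtain ⟨ξ, hξ0, hξp⟩ := hξex
      refine ⟨(∫ x in Ω, F x ξ) / ξ ^ 2, ⟨ξ, hξ0, rfl⟩, ?_⟩
      rw [hint ξ hξ0]
      have : (a / 2 + b / 3 * ξ - c / 4 * ξ ^ 2) = K - c / 4 * s ^ 2 := by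
        rw [← hξp]
      rw [this]
      nlinarith [hval]
  · exact mul_pos hK hβpos
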